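/- arXiv:2110.01279 — 3 statements merged into one kernel-verified Lean document; each statement's English description precedes it below -/
import Mathlib

section
/- For every n ≥ 1, the language M_n = M'_n ∪ M''_n over Σ_n = {1, 2, …, n} is cofinite, i.e., its complement Σ_n* \ M_n is a finite set of words. -/
/-- The language `M''_n` over a linearly ordered alphabet: all words containing two
occurrences of some letter `i` with only letters strictly smaller than `i`
in between. -/
def Mpp {α : Type*} [LT α] : Set (List α) :=
  { u | ∃ (x y z : List α) (i : α), u = x ++ i :: (y ++ i :: z) ∧ ∀ c ∈ y, c < i }

lemma first_split {α : Type*} [DecidableEq α] {a : α} :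
    ∀ {l : List α}, a ∈ l → ∃ x t, l = x ++ a :: t ∧ a ∉ x := by
  intro l h
  induction l with
  | nil => simp at h
  | cons b l ih =>
    by_cases hb : b = a
    · exact ⟨[], l, by simp [hb], by simp⟩
    · rcases ih ((List.mem_cons.mp h).resolve_left (fun e => hb e.symm)) with ⟨x, t, rfl, hx⟩
      exact ⟨b :: x, t, by simp, by simp [Ne.symm hb, hx]⟩

lemma Mpp_extend {α : Type*} [LT α] {v : List α} (p q : List α) (hv : v ∈ Mpp) :
    p ++ v ++ q ∈ Mpp := by
  obtain ⟨x, y, z, i, rfl, hy⟩ := hv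
  exact ⟨p ++ x, y, z ++ q, i, by simp, hy⟩

lemma key {n : ℕ} : ∀ (m : ℕ) (u : List (Fin n)), (∀ c ∈ u, c.val < m) →
    2 ^ m ≤ u.length → u ∈ Mpp := by
  intro m
  induction m with
  | zero =>
    intro u hc hl
    match u with
    | [] => simp at hl
    | a :: t => exact absurd (hc a (by simp)) (by omega)
  | succ m ih =>
    intro u hc hl
    by_cases hex : ∃ a ∈ u, a.val = m
    · obtain ⟨a, ha, ham⟩ := hex
      obtain ⟨x, t, rfl, hx⟩ := first_split ha
      by_cases hat : a ∈ t
      · -- second occurrence: u ∈ Mpp directly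
        obtain ⟨y, z, rfl, hy⟩ := first_split hat
        refine ⟨x, y, z, a, by simp, ?_⟩
        intro c hcy
        have hc1 : c.val < m + 1 := hc c (by simp [hcy])
        have : c ≠ a := fun h => hy (h ▸ hcy)
        have : c.val ≠ m := fun h => this (Fin.ext (h.trans ham.symm))
        exact Fin.lt_def.mpr (by omega)
      · -- a occurs once; one side is long
        have hx' : ∀ c ∈ x, c.val < m := by
          intro c hcx
          have hc1 : c.val < m + 1 := hc c (by simp [hcx])
          have : c ≠ a := fun h => hx (h ▸ hcx)
          have : c.val ≠ m := fun h => this (Fin.ext (h.trans ham.symm))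
          omega
        have ht' : ∀ c ∈ t, c.val < m := by
          intro c hct
          have hc1 : c.val < m + 1 := hc c (by simp [hct])
          have : c ≠ a := fun h => hat (h ▸ hct)
          have : c.val ≠ m := fun h => this (Fin.ext (h.trans ham.symm))
          omega
        have hlen : 2 ^ m ≤ x.length ∨ 2 ^ m ≤ t.length := by
          simp only [List.length_append, List.length_cons] at hl
          have : 2 ^ (m + 1) = 2 ^ m + 2 ^ m := by ring
          omega
        rcases hlen with h | h
        · have := ih x hx' h
          simpa using Mpp_extend [] (a :: t) this
        · have := ih t ht' h
          simpa using Mpp_extend (x ++ [a]) [] this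
    · push_neg at hex
      refine ih u (fun c hcu => ?_) (le_trans (Nat.pow_le_pow_right (by norm_num) (by omega)) hl)
      have := hc c hcu
      have := hex c hcu
      omega

/-- The language `M_n = M'_n ∪ M''_n` (words of odd length together with `M''_n`)
over the `n`-letter ordered alphabet is cofinite: its complement is finite. -/
theorem stmt_8 (n : ℕ) (hn : 1 ≤ n) :
    Set.Finite ({ u : List (Fin n) | Odd u.length } ∪ Mpp)ᶜ := by
  apply Set.Finite.subset (List.finite_length_lt (Fin n) (2 ^ n))
  intro u hu
  simp only [Set.mem_compl_iff, Set.mem_union, Set.mem_setOf_eq, not_or] at hu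
  by_contra h
  exact hu.2 (key n u (fun c _ => c.isLt) (by simpa using h))
end

section
/- For every n ≥ 1, there exists an NFA with exactly n + 2 states over the alphabet Σ_n = {1, 2, …, n} that accepts the language M''_n. -/
namespace NFA

variable {α σ σ' : Type*}

def reindex (g : σ ≃ σ') (M : NFA α σ) : NFA α σ' where
  step s a := g '' M.step (g.symm s) a
  start := g '' M.start
  accept := g '' M.accept

theorem stepSet_reindex (g : σ ≃ σ') (M : NFA α σ) (S : Set σ) (a : α) :
    (M.reindex g).stepSet (g '' S) a = g '' M.stepSet S a := by
  simp only [stepSet, reindex, Set.image_iUnion₂, Set.biUnion_image, Equiv.symm_apply_apply]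

theorem evalFrom_reindex (g : σ ≃ σ') (M : NFA α σ) (S : Set σ) (x : List α) :
    (M.reindex g).evalFrom (g '' S) x = g '' M.evalFrom S x := by
  induction x generalizing S with
  | nil => rfl
  | cons a x ih => simp only [evalFrom_cons, stepSet_reindex, ih]

theorem accepts_reindex (g : σ ≃ σ') (M : NFA α σ) : (M.reindex g).accepts = M.accepts := by
  ext x
  simp only [mem_accepts]
  rw [show (M.reindex g).start = g '' M.start from rfl, evalFrom_reindex]
  simp only [reindex, Set.exists_mem_image, g.injective.mem_set_image]

end NFA

namespace Mpp

variable {α : Type*} [LT α]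

def pending (a : α) : Set (List α) :=
  { w | ∃ x y, w = x ++ a :: y ∧ ∀ c ∈ y, c < a }

theorem nil_notMem_pending (a : α) : [] ∉ pending a := by
  rintro ⟨x, y, h, -⟩
  simp at h

theorem append_singleton_mem_pending_iff (w : List α) (a c : α) :
    w ++ [c] ∈ pending a ↔ c = a ∨ (c < a ∧ w ∈ pending a) := by
  constructor
  · rintro ⟨x, y, h, hy⟩
    rcases List.eq_nil_or_concat' y with rfl | ⟨y, b, rfl⟩
    · exact Or.inl (List.append_singleton_inj.mp h).2
    · rw [← List.cons_append, ← List.append_assoc, List.append_singleton_inj] at h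
      obtain ⟨rfl, rfl⟩ := h
      exact Or.inr ⟨hy c (by simp), x, y, rfl, fun d hd => hy d (by simp [hd])⟩
  · rintro (rfl | ⟨hc, x, y, rfl, hy⟩)
    · exact ⟨w, [], rfl, by simp⟩
    · refine ⟨x, y ++ [c], by simp, ?_⟩
      simpa [or_imp, forall_and] using And.intro hy hc

theorem nil_notMem : [] ∉ (Mpp : Set (List α)) := by
  rintro ⟨x, y, z, i, h, -⟩
  simp at h

theorem append_singleton_mem_iff (w : List α) (c : α) :
    w ++ [c] ∈ (Mpp : Set (List α)) ↔ w ∈ (Mpp : Set (List α)) ∨ w ∈ pending c := by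
  constructor
  · rintro ⟨x, y, z, i, h, hy⟩
    rcases List.eq_nil_or_concat' z with rfl | ⟨z, b, rfl⟩
    · obtain ⟨rfl, rfl⟩ :=
        List.append_singleton_inj.mp (h.trans (by simp) : w ++ [c] = (x ++ i :: y) ++ [i])
      exact Or.inr ⟨x, y, rfl, hy⟩
    · obtain ⟨rfl, rfl⟩ :=
        List.append_singleton_inj.mp
          (h.trans (by simp) : w ++ [c] = (x ++ i :: (y ++ i :: z)) ++ [b])
      exact Or.inl ⟨x, y, z, i, by simp, hy⟩
  · rintro (⟨x, y, z, i, rfl, hy⟩ | ⟨x, y, rfl, hy⟩)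
    · exact ⟨x, y, z ++ [c], i, by simp, hy⟩
    · exact ⟨x, y, [], c, by simp, hy⟩

/-- The state `some ↑a` means that `a` is pending. The accepting state `some ⊤` lies above every
letter, so the rule keeping a pending letter under smaller letters also makes it absorbing. -/
def nfa (α : Type*) [LT α] : NFA α (Option (WithTop α)) where
  step
    | none, c => {none, some ↑c}
    | some q, c => {r | (↑c = q ∧ r = some ⊤) ∨ (↑c < q ∧ r = some q)}
  start := {none}
  accept := {some ⊤}

theorem none_mem_eval_nfa (w : List α) : none ∈ (nfa α).eval w := by
  induction w using List.reverseRecOn with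
  | nil => rfl
  | append_singleton w c ih =>
    rw [NFA.eval_append_singleton, NFA.mem_stepSet]
    exact ⟨none, ih, Set.mem_insert _ _⟩

theorem some_mem_eval_nfa_append_singleton_iff (w : List α) (c : α) (q : WithTop α) :
    some q ∈ (nfa α).eval (w ++ [c]) ↔
      q = c ∨ (q = ⊤ ∧ some ↑c ∈ (nfa α).eval w) ∨
        (↑c < q ∧ some q ∈ (nfa α).eval w) := by
  rw [NFA.eval_append_singleton, NFA.mem_stepSet]
  constructor
  · rintro ⟨_ | p, hp, hq⟩
    · simp only [nfa, Set.mem_insert_iff, Set.mem_singleton_iff, reduceCtorEq,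
        Option.some.injEq, false_or] at hq
      exact Or.inl hq
    · simp only [nfa, Set.mem_ofPred_eq, Option.some.injEq] at hq
      rcases hq with ⟨rfl, rfl⟩ | ⟨hc, rfl⟩
      · exact Or.inr (Or.inl ⟨rfl, hp⟩)
      · exact Or.inr (Or.inr ⟨hc, hp⟩)
  · rintro (rfl | ⟨rfl, hc⟩ | ⟨hc, hq⟩)
    · exact ⟨none, none_mem_eval_nfa w, by simp [nfa]⟩
    · exact ⟨some c, hc, by simp [nfa]⟩
    · exact ⟨some q, hq, by simp [nfa, hc]⟩

theorem coe_mem_eval_nfa_iff (a : α) (w : List α) :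
    some ↑a ∈ (nfa α).eval w ↔ w ∈ pending a := by
  induction w using List.reverseRecOn with
  | nil => simpa [nfa] using nil_notMem_pending a
  | append_singleton w c ih =>
    rw [some_mem_eval_nfa_append_singleton_iff, append_singleton_mem_pending_iff, ih]
    simp [eq_comm]

theorem top_mem_eval_nfa_iff (w : List α) :
    some ⊤ ∈ (nfa α).eval w ↔ w ∈ (Mpp : Set (List α)) := by
  induction w using List.reverseRecOn with
  | nil => simpa [nfa] using nil_notMem
  | append_singleton w c ih =>
    rw [some_mem_eval_nfa_append_singleton_iff, append_singleton_mem_iff, ih, coe_mem_eval_nfa_iff]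
    simp [or_comm]

theorem accepts_nfa : (nfa α).accepts = Mpp := by
  ext w
  exact exists_eq_left.trans (top_mem_eval_nfa_iff w)

end Mpp

theorem stmt_9_general (n : ℕ) :
    ∃ (B : NFA (Fin n) (Fin (n + 2))) (q₀ : Fin (n + 2)),
      B.start = {q₀} ∧
        ∀ w : List (Fin n), w ∈ B.accepts ↔ w ∈ (Mpp : Set (List (Fin n))) := by
  have hcard : Fintype.card (Option (WithTop (Fin n))) = n + 2 := by
    have hcard_top : Fintype.card (WithTop (Fin n)) = n + 1 :=
      (Fintype.card_option (α := Fin n)).trans (by simp)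
    rw [Fintype.card_option, hcard_top]
  let g := Fintype.equivFinOfCardEq hcard
  refine ⟨(Mpp.nfa (Fin n)).reindex g, g none, Set.image_singleton, fun w => ?_⟩
  rw [NFA.accepts_reindex, Mpp.accepts_nfa]
  exact Iff.rfl

/-- There is an NFA with exactly `n + 2` states (and a single start state) over the
`n`-letter ordered alphabet that accepts `M''_n`. -/
theorem stmt_9 (n : ℕ) (hn : 1 ≤ n) :
    ∃ (B : NFA (Fin n) (Fin (n + 2))) (q₀ : Fin (n + 2)),
      B.start = {q₀} ∧
        ∀ w : List (Fin n), w ∈ B.accepts ↔ w ∈ (Mpp : Set (List (Fin n))) :=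
  stmt_9_general n
end

section
/- For every n ≥ 1, every partially ordered NFA (poNFA) over the alphabet Σ_n = {1, 2, …, n} that accepts the language M_n = M'_n ∪ M''_n has more than 2^{n−1} states. -/
/-- State `q` is reachable from state `p` in the NFA `M`. -/
def NFA.Reach {α σ : Type*} (M : NFA α σ) (p q : σ) : Prop :=
  ∃ w : List α, q ∈ M.evalFrom {p} w

/-- An NFA is *partially ordered* (a poNFA) if the reachability relation is
antisymmetric, i.e., a partial order on the states. -/
def NFA.PartiallyOrdered {α σ : Type*} (M : NFA α σ) : Prop :=
  ∀ p q : σ, M.Reach p q → M.Reach q p → p = q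

/-!
Let `Z` be the Zimin word over the letters `n-1 > ⋯ > 1 > 0`, built by `Z (a :: l) = Z l a Z l`.
It has odd length `2^n - 1`, avoids `M''_n`, and has the shape `0 c₁ 0 c₂ ⋯ c_N 0` with
`N = 2^(n-1) - 1`. As `0` is the least letter, deleting one of its occurrences cannot create a
factor of `M''_n`, so every such deletion, having even length, is rejected. Hence each of the
`N + 1` transitions on `0` of an accepting run on `Z` changes the state. A run of a poNFA never
returns to a state it has left, so it visits at least `N + 2 = 2^(n-1) + 1` states.
-/

section Mpp

variable {α : Type*}

theorem nil_notMem_Mpp [LT α] : ([] : List α) ∉ Mpp := by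
  rintro ⟨x, y, z, i, h, -⟩
  simp at h

theorem append_cons_notMem_Mpp [Preorder α] {u v : List α} {m : α} (hu : ∀ c ∈ u, c < m)
    (hv : ∀ c ∈ v, c < m) (hu' : u ∉ Mpp) (hv' : v ∉ Mpp) : u ++ m :: v ∉ Mpp := by
  have hm : m ∉ v := fun h => lt_irrefl m (hv m h)
  rintro ⟨x, y, z, i, hw, hy⟩
  rcases List.append_eq_append_iff.mp hw with ⟨s, rfl, hs⟩ | ⟨s, rfl, hs⟩
  · rcases List.cons_eq_append_iff.mp hs with ⟨rfl, hs⟩ | ⟨s, rfl, rfl⟩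
    · obtain ⟨rfl, rfl⟩ := List.cons.inj hs
      exact hm (by simp)
    · exact hv' ⟨s, y, z, i, rfl, hy⟩
  · rcases List.cons_eq_append_iff.mp hs with ⟨rfl, hs⟩ | ⟨s, rfl, hs⟩
    · obtain ⟨rfl, rfl⟩ := List.cons.inj hs
      exact hm (by simp)
    simp only [List.cons_append, List.cons.injEq, true_and] at hs
    have hi : i < m := hu i (by simp)
    rcases List.append_eq_append_iff.mp hs with ⟨t, rfl, ht⟩ | ⟨t, rfl, ht⟩
    · rcases List.cons_eq_append_iff.mp ht with ⟨rfl, ht⟩ | ⟨t, rfl, -⟩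
      · obtain ⟨rfl, -⟩ := List.cons.inj ht
        exact lt_irrefl _ hi
      · exact hu' ⟨x, y, t, i, by simp, hy⟩
    · rcases List.cons_eq_append_iff.mp ht with ⟨rfl, ht⟩ | ⟨t, rfl, -⟩
      · obtain ⟨rfl, -⟩ := List.cons.inj ht
        exact lt_irrefl _ hi
      · exact lt_asymm hi (hy m (by simp))

theorem append_cons_append_mem_Mpp [PartialOrder α] (x : List α) {s t : List α} {i a : α}
    (hs : ∀ c ∈ s, c < i) (ht : ∀ c ∈ t, c < i) (hai : a ≤ i) (z : List α) :
    x ++ i :: (s ++ a :: (t ++ i :: z)) ∈ Mpp := by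
  rcases hai.lt_or_eq with hai | rfl
  · refine ⟨x, s ++ a :: t, z, i, by simp, ?_⟩
    simp only [List.mem_append, List.mem_cons]
    rintro c (hc | rfl | hc)
    exacts [hs c hc, hai, ht c hc]
  · -- the inserted letter itself closes the pattern
    exact ⟨x, s, t ++ a :: z, a, by simp, hs⟩

theorem append_cons_mem_Mpp_of_append_mem_Mpp [PartialOrder α] {x z : List α} {a : α}
    (ha : ∀ c ∈ x ++ z, a ≤ c) (h : x ++ z ∈ Mpp) : x ++ a :: z ∈ Mpp := by
  obtain ⟨x', y, z', i, hw, hy⟩ := h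
  rcases List.append_eq_append_iff.mp hw with ⟨s, rfl, rfl⟩ | ⟨s, rfl, hs⟩
  · exact ⟨x ++ a :: s, y, z', i, by simp, hy⟩
  rcases List.cons_eq_append_iff.mp hs with ⟨rfl, rfl⟩ | ⟨s, rfl, hs⟩
  · exact ⟨x' ++ [a], y, z', i, by simp, hy⟩
  simp only [List.cons_append, List.cons.injEq, true_and] at hs
  have hai : a ≤ i := ha i (by simp)
  rcases List.append_eq_append_iff.mp hs with ⟨t, rfl, ht⟩ | ⟨t, rfl, rfl⟩
  · rcases List.cons_eq_append_iff.mp ht with ⟨rfl, rfl⟩ | ⟨t, rfl, rfl⟩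
    · simpa using append_cons_append_mem_Mpp x' hy (t := []) (by simp) hai z'
    · exact ⟨x', y, t ++ a :: z, i, by simp, hy⟩
  · simpa using append_cons_append_mem_Mpp x' (s := s) (t := t)
      (fun c hc => hy c (by simp [hc])) (fun c hc => hy c (by simp [hc])) hai z'

end Mpp

section Zimin
variable {α : Type*}

def zimin : List α → List α
  | [] => []
  | a :: l => zimin l ++ a :: zimin l

theorem mem_zimin {l : List α} {c : α} : c ∈ zimin l ↔ c ∈ l := by
  induction l with
  | nil => simp [zimin]
  | cons a l ih =>
    simp only [zimin, List.mem_append, List.mem_cons, ih]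
    tauto

theorem length_zimin (l : List α) : (zimin l).length = 2 ^ l.length - 1 := by
  induction l with
  | nil => simp [zimin]
  | cons a l ih =>
    simp only [zimin, List.length_append, List.length_cons, ih, pow_succ]
    have := l.length.one_le_two_pow
    omega

theorem zimin_append_singleton (l : List α) (a : α) :
    zimin (l ++ [a]) = (zimin l).flatMap (fun c => [a, c]) ++ [a] := by
  induction l with
  | nil => simp [zimin]
  | cons b l ih => simp [zimin, ih]

theorem zimin_notMem_Mpp [Preorder α] {l : List α} (hl : l.Pairwise (· > ·)) :
    zimin l ∉ Mpp := by
  induction l with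
  | nil => exact nil_notMem_Mpp
  | cons a l ih =>
    have hlt : ∀ c ∈ zimin l, c < a := fun c hc =>
      List.rel_of_pairwise_cons hl (mem_zimin.mp hc)
    exact append_cons_notMem_Mpp hlt hlt (ih hl.of_cons) (ih hl.of_cons)

end Zimin

namespace NFA
variable {α σ : Type*} {M : NFA α σ}

theorem Reach.refl (p : σ) : M.Reach p p := ⟨[], rfl⟩

theorem Reach.of_mem_step {p q : σ} {a : α} (h : q ∈ M.step p a) : M.Reach p q :=
  ⟨[a], by simpa [evalFrom_singleton, stepSet_singleton] using h⟩

theorem Reach.trans {p q r : σ} (hpq : M.Reach p q) (hqr : M.Reach q r) : M.Reach p r := by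
  obtain ⟨u, hu⟩ := hpq
  obtain ⟨v, hv⟩ := hqr
  exact ⟨u ++ v, by rw [evalFrom_append, mem_evalFrom_iff_exists]; exact ⟨q, hu, hv⟩⟩

theorem mem_acceptsFrom_iff_exists {S : Set σ} {x : List α} :
    x ∈ M.acceptsFrom S ↔ ∃ p ∈ S, x ∈ M.acceptsFrom {p} := by
  simp only [mem_acceptsFrom, mem_evalFrom_iff_exists (S := S)]
  tauto

theorem cons_mem_acceptsFrom_singleton {p : σ} {a : α} {x : List α} :
    a :: x ∈ M.acceptsFrom {p} ↔ ∃ q ∈ M.step p a, x ∈ M.acceptsFrom {q} := by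
  rw [cons_mem_acceptsFrom, stepSet_singleton, mem_acceptsFrom_iff_exists]

theorem PartiallyOrdered.length_add_one_lt_ncard_reach [Finite σ] (hpo : M.PartiallyOrdered)
    {a : α} (u : List α) {p : σ}
    (hacc : u.flatMap (fun c => [a, c]) ++ [a] ∈ M.acceptsFrom {p})
    (hdel : ∀ x z, u.flatMap (fun c => [a, c]) ++ [a] = x ++ a :: z →
      x ++ z ∉ M.acceptsFrom {p}) :
    u.length + 1 < {q | M.Reach p q}.ncard := by
  induction u generalizing p with
  | nil =>
    obtain ⟨f, hf, hfacc⟩ := cons_mem_acceptsFrom_singleton.mp hacc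
    have hpf : p ≠ f := by
      rintro rfl
      exact hdel [] [] rfl hfacc
    have hsub : ({p, f} : Set σ) ⊆ {q | M.Reach p q} := by
      rintro q (rfl | rfl)
      exacts [Reach.refl q, Reach.of_mem_step hf]
    calc 0 + 1 < ({p, f} : Set σ).ncard := by rw [Set.ncard_pair hpf]; norm_num
      _ ≤ _ := Set.ncard_le_ncard hsub
  | cons c u ih =>
    simp only [List.flatMap_cons, List.cons_append, List.nil_append] at hacc hdel
    obtain ⟨p₁, hp₁, hacc₁⟩ := cons_mem_acceptsFrom_singleton.mp hacc
    obtain ⟨p₂, hp₂, hacc₂⟩ := cons_mem_acceptsFrom_singleton.mp hacc₁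
    have hne : p ≠ p₁ := by
      rintro rfl
      exact hdel [] _ rfl hacc₁
    have hdel₂ : ∀ x z, u.flatMap (fun c => [a, c]) ++ [a] = x ++ a :: z →
        x ++ z ∉ M.acceptsFrom {p₂} := by
      rintro x z hxz hx
      refine hdel (a :: c :: x) z (by simp [hxz]) ?_
      exact cons_mem_acceptsFrom_singleton.mpr
        ⟨p₁, hp₁, cons_mem_acceptsFrom_singleton.mpr ⟨p₂, hp₂, hx⟩⟩
    have hp : p ∉ {q | M.Reach p₂ q} := fun h =>
      hne (hpo _ _ (Reach.of_mem_step hp₁) ((Reach.of_mem_step hp₂).trans h))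
    have hsub : insert p {q | M.Reach p₂ q} ⊆ {q | M.Reach p q} := by
      rintro q (rfl | hq)
      exacts [Reach.refl q, ((Reach.of_mem_step hp₁).trans (Reach.of_mem_step hp₂)).trans hq]
    calc (c :: u).length + 1 < {q | M.Reach p₂ q}.ncard + 1 := by
          simpa using ih hacc₂ hdel₂
      _ = (insert p {q | M.Reach p₂ q}).ncard := (Set.ncard_insert_of_notMem hp).symm
      _ ≤ _ := Set.ncard_le_ncard hsub

end NFA

/-- Every partially ordered NFA accepting `M_n = M'_n ∪ M''_n` has more than
`2^(n-1)` states. -/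
theorem stmt_11 (n : ℕ) (hn : 1 ≤ n) (σ : Type) [Fintype σ]
    (B : NFA (Fin n) σ) (q₀ : σ) (hstart : B.start = {q₀})
    (hpo : B.PartiallyOrdered)
    (hacc : ∀ w : List (Fin n),
      w ∈ B.accepts ↔ (Odd w.length ∨ w ∈ (Mpp : Set (List (Fin n))))) :
    2 ^ (n - 1) < Fintype.card σ := by
  obtain ⟨m, rfl⟩ : ∃ m, n = m + 1 := ⟨n - 1, by omega⟩
  set u := zimin ((List.finRange m).map Fin.succ).reverse
  have hfree : u.flatMap (fun c => [0, c]) ++ [0] ∉ Mpp := by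
    have hdesc : (List.finRange (m + 1)).reverse.Pairwise (· > ·) :=
      List.pairwise_reverse.mpr (List.pairwise_lt_finRange _)
    simpa [u, List.finRange_succ, zimin_append_singleton] using zimin_notMem_Mpp hdesc
  rw [NFA.accepts_eq_acceptsFrom_start, hstart] at hacc
  have hdel : ∀ x z, u.flatMap (fun c => [0, c]) ++ [0] = x ++ 0 :: z →
      x ++ z ∉ B.acceptsFrom {q₀} := by
    intro x z hw hxz
    rcases (hacc _).mp hxz with hodd | hmem
    · have hlen := congrArg List.length hw
      simp only [List.length_append, List.length_flatMap, List.length_cons, List.length_nil,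
        List.map_const', List.sum_replicate, smul_eq_mul] at hlen
      rw [List.length_append, Nat.odd_iff] at hodd
      omega
    · exact hfree (hw ▸ append_cons_mem_Mpp_of_append_mem_Mpp (fun c _ => Fin.zero_le c) hmem)
  have hreach := hpo.length_add_one_lt_ncard_reach u ((hacc _).mpr (Or.inl (by simp))) hdel
  calc 2 ^ (m + 1 - 1) = u.length + 1 := by
        simp [u, length_zimin, Nat.sub_add_cancel Nat.one_le_two_pow]
    _ < _ := hreach
    _ ≤ Nat.card σ := Set.ncard_le_card _
    _ = Fintype.card σ := Nat.card_eq_fintype_card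
end
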